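/- Let T be the 3x3 real matrix (2/5)[[3,1,1],[1,3,1],[1,1,3]]. For every (a,b,c) in R^3, writing (x,y,z)^T = T (a,b,c)^T, one has: ab + bc + ca = 0 if and only if 11(x+y+z)^2 = 25(x^2+y^2+z^2), and ab + bc + ca >= 0 if and only if 11(x+y+z)^2 >= 25(x^2+y^2+z^2). -/

import Mathlib

/-!
With `s = a + b + c` and `q = ab + bc + ca`, the image is `(x, y, z) = (2/5)(2a + s, 2b + s, 2c + s)`,
so `x + y + z = 2s` and `25(x² + y² + z²) = 44s² - 32q`. Hence the quadratic form
`11(x + y + z)² - 25(x² + y² + z²)` pulls back under `T` to exactly `32(ab + bc + ca)`,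
and both equivalences follow.
-/

open Matrix

/-- The matrix `T = (2/5)[[3,1,1],[1,3,1],[1,1,3]]` transforming coefficient triples of
energy measures into triples of values on the three level-1 cells. -/
noncomputable def Tmat : Matrix (Fin 3) (Fin 3) ℝ :=
  (2 / 5 : ℝ) • !![3, 1, 1; 1, 3, 1; 1, 1, 3]

lemma Tmat_mulVec (a b c : ℝ) :
    Tmat *ᵥ ![a, b, c] =
      ![2 / 5 * (3 * a + b + c), 2 / 5 * (a + 3 * b + c), 2 / 5 * (a + b + 3 * c)] := by
  ext i
  fin_cases i <;>
    simp only [Tmat, mulVec, dotProduct, Fin.sum_univ_three, Matrix.smul_apply, of_apply,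
      smul_eq_mul, cons_val', cons_val_fin_one, cons_val_zero, cons_val_one, cons_val_two,
      head_cons, tail_cons, head_fin_const, Fin.zero_eta, Fin.mk_one, Fin.reduceFinMk] <;>
    ring

lemma Tmat_mulVec_quadratic_form (a b c : ℝ) :
    let v := Tmat *ᵥ ![a, b, c]
    11 * (v 0 + v 1 + v 2) ^ 2 - 25 * (v 0 ^ 2 + v 1 ^ 2 + v 2 ^ 2) =
      32 * (a * b + b * c + c * a) := by
  simp only [Tmat_mulVec, cons_val_zero, cons_val_one, cons_val_two, head_cons, tail_cons]
  ring

/-- For every `(a,b,c) ∈ ℝ³`, writing `(x,y,z)ᵀ = T (a,b,c)ᵀ`: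
`ab + bc + ca = 0 ↔ 11(x+y+z)² = 25(x²+y²+z²)`, and
`ab + bc + ca ≥ 0 ↔ 11(x+y+z)² ≥ 25(x²+y²+z²)`. -/
theorem stmt_3 (a b c x y z : ℝ)
    (hx : x = (Tmat *ᵥ ![a, b, c]) 0)
    (hy : y = (Tmat *ᵥ ![a, b, c]) 1)
    (hz : z = (Tmat *ᵥ ![a, b, c]) 2) :
    (a * b + b * c + c * a = 0 ↔
      11 * (x + y + z) ^ 2 = 25 * (x ^ 2 + y ^ 2 + z ^ 2)) ∧
    (a * b + b * c + c * a ≥ 0 ↔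
      11 * (x + y + z) ^ 2 ≥ 25 * (x ^ 2 + y ^ 2 + z ^ 2)) := by
  have h : 11 * (x + y + z) ^ 2 - 25 * (x ^ 2 + y ^ 2 + z ^ 2) =
      32 * (a * b + b * c + c * a) := by
    subst hx hy hz
    exact Tmat_mulVec_quadratic_form a b c
  constructor <;> constructor <;> intro <;> linarith
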